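/- Let {E_i}_{i=1}^n be a POVM on ℂ^d with d ≤ n, n ≥ 2, and every effect E_i nonzero, and define its orthogonality O = Σ_{i,j=1}^n (tr(√E_i √E_j))² − 2d + n. Then O ≥ (n−d)²/(n−1). -/

import Mathlib

/-!
Write `K i = √(E i)`, `x i = tr (K i)` and `G i j = tr (K i * K j)`, so that the orthogonality is
the squared Frobenius norm of `B = 1 - G` and `tr B = n - d`. Since `K ^ 2 ≤ (tr K) • K` for every
`K ≥ 0`, the matrix `C = ∑ i, x i • K i` satisfies `C ≥ ∑ i, K i ^ 2 = 1`; hence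
`tr (C ^ 2 - C) = tr ((C - 1) ^ 2) + tr (C - 1) ≥ 0`, which says `xᵀ B x ≤ 0`. Pairing `B` with the
projection onto `xᗮ` by Cauchy–Schwarz then gives `(n - d) ^ 2 ≤ (n - 1) ‖B‖ ^ 2`.
-/

open Matrix BigOperators
open scoped ComplexOrder

/-- The positive semidefinite square root of a positive semidefinite matrix
(the definition `Matrix.PosSemidef.sqrt` of the older Mathlib, since removed). -/
noncomputable def Matrix.PosSemidef.sqrt {n : Type*} [Fintype n] [DecidableEq n] {𝕜 : Type*}
    [RCLike 𝕜] {A : Matrix n n 𝕜} (hA : A.PosSemidef) : Matrix n n 𝕜 :=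
  (hA.1.eigenvectorUnitary : Matrix n n 𝕜) * diagonal (((↑) : ℝ → 𝕜) ∘ (√·) ∘ hA.1.eigenvalues) *
    (star hA.1.eigenvectorUnitary : Matrix n n 𝕜)

namespace Matrix

variable {m : Type*} [Fintype m] {𝕜 : Type*} [RCLike 𝕜]

lemma IsHermitian.coe_re_trace {A : Matrix m m 𝕜} (hA : A.IsHermitian) :
    (RCLike.re A.trace : 𝕜) = A.trace := by
  simp [trace, hA.coe_re_apply_self]

variable [DecidableEq m]

lemma posSemidef_conjStarAlgAut_diagonal (U : unitary (Matrix m m 𝕜)) {f : m → ℝ} (hf : 0 ≤ f) :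
    (Unitary.conjStarAlgAut 𝕜 _ U (diagonal (RCLike.ofReal ∘ f))).PosSemidef := by
  rw [Unitary.conjStarAlgAut_apply, Unitary.isUnit_coe.posSemidef_star_right_conjugate_iff,
    posSemidef_diagonal_iff]
  simpa [Pi.le_def] using hf

namespace PosSemidef

variable {A : Matrix m m 𝕜} (hA : A.PosSemidef)
include hA

lemma sqrt_eq_conjStarAlgAut : hA.sqrt = Unitary.conjStarAlgAut 𝕜 _ hA.1.eigenvectorUnitary
    (diagonal (RCLike.ofReal ∘ (√·) ∘ hA.1.eigenvalues)) :=
  rfl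

lemma posSemidef_sqrt : hA.sqrt.PosSemidef := by
  rw [sqrt_eq_conjStarAlgAut]
  exact posSemidef_conjStarAlgAut_diagonal _ fun i ↦ Real.sqrt_nonneg _

lemma sqrt_mul_self : hA.sqrt * hA.sqrt = A := by
  conv_rhs => rw [hA.1.spectral_theorem]
  rw [sqrt_eq_conjStarAlgAut, ← map_mul, diagonal_mul_diagonal]
  congr 2
  ext i
  simp [← RCLike.ofReal_mul, Real.mul_self_sqrt (hA.eigenvalues_nonneg i)]

lemma posSemidef_trace_smul_sub_mul_self : (A.trace • A - A * A).PosSemidef := by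
  have htr := hA.1.trace_eq_sum_eigenvalues
  have hspec := hA.1.spectral_theorem
  have hev := hA.eigenvalues_nonneg
  set U := hA.1.eigenvectorUnitary
  set ev := hA.1.eigenvalues
  -- detach `U` and `ev` from `A`, so that `hspec` can rewrite `A`
  clear_value U ev
  have hle : ∀ i, ev i ≤ ∑ j, ev j := fun i ↦
    Finset.single_le_sum (fun j _ ↦ hev j) (Finset.mem_univ i)
  have hdiag : (∑ j, (ev j : 𝕜)) • diagonal (RCLike.ofReal ∘ ev : m → 𝕜) -
      diagonal (RCLike.ofReal ∘ ev) * diagonal (RCLike.ofReal ∘ ev) =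
      diagonal (RCLike.ofReal ∘ fun i ↦ ev i * (∑ j, ev j - ev i)) := by
    ext i j
    rcases eq_or_ne i j with rfl | hij
    · simp; ring
    · simp [hij]
  rw [htr, hspec, ← map_smul, ← map_mul, ← map_sub, hdiag]
  exact posSemidef_conjStarAlgAut_diagonal U fun i ↦ mul_nonneg (hev i) (sub_nonneg.2 (hle i))

end PosSemidef

variable {ι : Type*} [Fintype ι]

noncomputable def traceGram (K : ι → Matrix m m 𝕜) : Matrix ι ι ℝ :=
  of fun i j ↦ RCLike.re (K i * K j).trace

theorem dotProduct_self_le_dotProduct_traceGram_mulVec {K : ι → Matrix m m 𝕜}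
    (hK : ∀ i, (K i).PosSemidef) (hsum : ∑ i, K i * K i = 1) {x : ι → ℝ}
    (hx : ∀ i, (x i : 𝕜) = (K i).trace) :
    x ⬝ᵥ x ≤ x ⬝ᵥ traceGram K *ᵥ x := by
  set C := ∑ i, (K i).trace • K i
  have hC : (C - 1).PosSemidef := by
    rw [← hsum, ← Finset.sum_sub_distrib]
    exact posSemidef_sum _ fun i _ ↦ (hK i).posSemidef_trace_smul_sub_mul_self
  have hCC : 0 ≤ (C * C - C).trace := by
    have : C * C - C = (C - 1) * (C - 1)ᴴ + (C - 1) := by rw [hC.1.eq]; noncomm_ring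
    rw [this, trace_add]
    exact add_nonneg (posSemidef_self_mul_conjTranspose _).trace_nonneg hC.trace_nonneg
  have htrC : RCLike.re C.trace = x ⬝ᵥ x := by
    simp_rw [C, trace_sum, trace_smul, smul_eq_mul, ← hx, ← RCLike.ofReal_mul, ← RCLike.ofReal_sum,
      RCLike.ofReal_re]
    rfl
  have htrCC : RCLike.re (C * C).trace = x ⬝ᵥ traceGram K *ᵥ x := by
    simp_rw [C, Finset.sum_mul_sum, smul_mul_smul_comm, trace_sum, trace_smul, smul_eq_mul, ← hx,
      map_sum, ← RCLike.ofReal_mul, RCLike.re_ofReal_mul, dotProduct, mulVec, dotProduct,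
      traceGram, of_apply, Finset.mul_sum]
    exact Finset.sum_congr rfl fun i _ ↦ Finset.sum_congr rfl fun j _ ↦ by ring
  have hre := (RCLike.nonneg_iff.1 hCC).1
  rw [trace_sub, map_sub, htrC, htrCC] at hre
  linarith

section Real

variable [DecidableEq ι]

theorem sq_trace_le_of_dotProduct_mulVec_nonpos (B : Matrix ι ι ℝ) {x : ι → ℝ} (hx : x ≠ 0)
    (hB : x ⬝ᵥ B *ᵥ x ≤ 0) (htr : 0 ≤ B.trace) :
    B.trace ^ 2 ≤ (Fintype.card ι - 1) * ∑ i, ∑ j, B i j ^ 2 := by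
  set s := x ⬝ᵥ x
  have hs : 0 < s := (dotProduct_self_star_nonneg x).lt_of_ne' (by simpa [s] using hx)
  -- `P / s` is the orthogonal projection onto `xᗮ`, whose squared Frobenius norm is `card ι - 1`.
  set P : Matrix ι ι ℝ := s • 1 - vecMulVec x x
  have hP i j : P i j = s * (if i = j then 1 else 0) - x i * x j := by
    simp [P, one_apply, vecMulVec_apply]
  have hBP : ∑ i, ∑ j, B i j * P i j = s * B.trace - x ⬝ᵥ B *ᵥ x := by
    have h i j : B i j * P i j = s * (if i = j then B i j else 0) - x i * (B i j * x j) := by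
      rw [hP]; split_ifs <;> ring
    simp_rw [h, Finset.sum_sub_distrib, ← Finset.mul_sum]
    simp [trace, dotProduct, mulVec]
  have hPP : ∑ i, ∑ j, P i j ^ 2 = s ^ 2 * (Fintype.card ι - 1) := by
    have h i j : P i j ^ 2 = s ^ 2 * (if i = j then 1 else 0) -
        2 * s * (if i = j then x i * x j else 0) + x i ^ 2 * x j ^ 2 := by
      rw [hP]; split_ifs <;> ring
    have hsq : ∑ i, x i ^ 2 = s := by simp [s, dotProduct, sq]
    simp_rw [h, Finset.sum_add_distrib, Finset.sum_sub_distrib, ← Finset.mul_sum,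
      hsq, ← Finset.sum_mul, hsq]
    simp only [Finset.sum_ite_eq, Finset.mem_univ, if_true, Finset.sum_const, Finset.card_univ,
      nsmul_eq_mul, mul_one, ← sq, hsq]
    ring
  have hCS := Finset.sum_mul_sq_le_sq_mul_sq Finset.univ (fun p : ι × ι ↦ B p.1 p.2)
    (fun p ↦ P p.1 p.2)
  simp only [Fintype.sum_prod_type, hBP, hPP] at hCS
  refine le_of_mul_le_mul_left ?_ (pow_pos hs 2)
  calc s ^ 2 * B.trace ^ 2 = (s * B.trace) ^ 2 := by ring
    _ ≤ (s * B.trace - x ⬝ᵥ B *ᵥ x) ^ 2 := pow_le_pow_left₀ (by positivity) (by linarith) 2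
    _ ≤ (∑ i, ∑ j, B i j ^ 2) * (s ^ 2 * (Fintype.card ι - 1)) := hCS
    _ = s ^ 2 * ((Fintype.card ι - 1) * ∑ i, ∑ j, B i j ^ 2) := by ring

lemma sum_sq_one_sub_apply (G : Matrix ι ι ℝ) :
    ∑ i, ∑ j, (1 - G) i j ^ 2 = ∑ i, ∑ j, G i j ^ 2 - 2 * G.trace + Fintype.card ι := by
  have h i j : (1 - G) i j ^ 2 =
      G i j ^ 2 - 2 * (if i = j then G i j else 0) + if i = j then 1 else 0 := by
    rw [sub_apply, one_apply]
    split_ifs <;> ring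
  simp_rw [h, Finset.sum_add_distrib, Finset.sum_sub_distrib, ← Finset.mul_sum]
  simp [trace]

end Real

end Matrix

/-- For a POVM `{E_i}` on `ℂ^d` with `d ≤ n`, `n ≥ 2`, and all effects nonzero,
the orthogonality `O = Σ_{i,j} (tr(√E_i √E_j))² − 2d + n` satisfies `O ≥ (n−d)²/(n−1)`. -/
theorem orthogonality_lower_bound
    (d n : ℕ) (hdn : d ≤ n) (hn : 2 ≤ n)
    (E : Fin n → Matrix (Fin d) (Fin d) ℂ)
    (hE : ∀ i, (E i).PosSemidef)
    (hsum : ∑ i, E i = 1)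
    (hne : ∀ i, E i ≠ 0) :
    ((n : ℝ) - d) ^ 2 / ((n : ℝ) - 1)
      ≤ ∑ i, ∑ j, (((hE i).sqrt * (hE j).sqrt).trace.re) ^ 2 - 2 * (d : ℝ) + (n : ℝ) := by
  set K := fun i ↦ (hE i).sqrt
  have hK i : (K i).PosSemidef := (hE i).posSemidef_sqrt
  have hKK : ∑ i, K i * K i = 1 := by simpa only [K, PosSemidef.sqrt_mul_self] using hsum
  set x : Fin n → ℝ := fun i ↦ (K i).trace.re
  have hx i : (x i : ℂ) = (K i).trace := (hK i).1.coe_re_trace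
  have hx0 : x ≠ 0 := by
    let i : Fin n := ⟨0, by omega⟩
    have hKi : K i ≠ 0 := fun h ↦
      hne i (by rw [← (hE i).sqrt_mul_self, show (hE i).sqrt = 0 from h, zero_mul])
    exact fun h0 ↦ hKi ((hK i).trace_eq_zero_iff.1 (by rw [← hx, h0]; simp))
  set G := traceGram K
  have hG : x ⬝ᵥ (1 - G) *ᵥ x ≤ 0 := by
    rw [sub_mulVec, one_mulVec, dotProduct_sub, sub_nonpos]
    exact dotProduct_self_le_dotProduct_traceGram_mulVec hK hKK hx
  have htrG : G.trace = d := by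
    calc G.trace = RCLike.re (∑ i, K i * K i).trace := by rw [trace_sum, map_sum]; rfl
      _ = d := by simp [hKK]
  have key := sq_trace_le_of_dotProduct_mulVec_nonpos (1 - G) hx0 hG
    (by simpa [trace_sub, htrG] using hdn)
  rw [sum_sq_one_sub_apply, trace_sub, trace_one, htrG, Fintype.card_fin] at key
  have hn1 : (1 : ℝ) < n := by exact_mod_cast hn
  rw [div_le_iff₀ (by linarith)]
  simpa [G, traceGram, mul_comm] using key
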